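/- Let U be a finite set of size k ≥ 1, let 0 < α < 1, 0 < δ < 1, 1 ≤ s ≤ k, and let T ⊆ U be fixed. Let S_1, …, S_t be independent uniformly random s-element subsets of U, and say that S_i has an unusual intersection with T if either (|T| ≥ δk and |S_i ∩ T| ∉ [(1−α)·s·|T|/k, (1+α)·s·|T|/k]) or (|T| < δk and |S_i ∩ T| > (1+α)·δ·s). Then the probability that more than 4·t·exp(−α²·δ·s/3) of the sets S_1, …, S_t have an unusual intersection with T is at most exp(−(t/3)·exp(−α²·δ·s/3)). -/

import Mathlib

/-! For one uniform `s`-set `S`, the statistic `X = #(S ∩ T)` is hypergeometric, and its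
exponential moments are dominated by those of the binomial law `Bin(s, #T/k)`: adding one element
at a time, `z ^ X` and the number of points of `T` still available are oppositely ordered, so
Chebyshev's sum inequality closes an induction on `s`. The usual Chernoff bounds then show that
`S` is unusual with probability at most `2q`, where `q = exp(-α²δs/3)`. For `t` independent sets,
`2 ^ #(unusual sets)` has mean at most `(1 + 2q)^t ≤ exp(2qt)`, so by Markov's inequality more than
`4qt` unusual sets occur with probability at most `exp(2qt) / 2^(4qt) ≤ exp(-qt/3)`. -/

open Finset

/-- `S` has an *unusual intersection* with `T` (within a universe `U` of size `k`,
with parameters `α`, `δ` and sample size `s`) if either `|T| ≥ δk` and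
`|S ∩ T| ∉ [(1−α)·s·|T|/k, (1+α)·s·|T|/k]`, or `|T| < δk` and `|S ∩ T| > (1+α)·δ·s`. -/
def UnusualIntersection {U : Type*} [Fintype U] [DecidableEq U]
    (α δ : ℝ) (s : ℕ) (T S : Finset U) : Prop :=
  (δ * Fintype.card U ≤ (T.card : ℝ) ∧
      ((S ∩ T).card : ℝ) ∉
        Set.Icc ((1 - α) * s * T.card / Fintype.card U)
          ((1 + α) * s * T.card / Fintype.card U)) ∨
  ((T.card : ℝ) < δ * Fintype.card U ∧ (1 + α) * δ * s < ((S ∩ T).card : ℝ))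

noncomputable instance {U : Type*} [Fintype U] [DecidableEq U] (α δ : ℝ) (s : ℕ) (T S : Finset U) :
    Decidable (UnusualIntersection α δ s T S) := by
  unfold UnusualIntersection; infer_instance

open Real

lemma two_thirds_mul_le_log_one_add {x : ℝ} (h0 : 0 ≤ x) (h1 : x ≤ 1) :
    2 / 3 * x ≤ log (1 + x) := by
  -- convexity of `exp` on `[0, log 2]` gives `exp (x log 2) ≤ 1 + x`
  have hconv := convexOn_exp.2 (Set.mem_univ 0) (Set.mem_univ (log 2)) (sub_nonneg.2 h1) h0
    (by ring)
  simp only [smul_eq_mul, mul_zero, zero_add, exp_zero, exp_log two_pos] at hconv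
  rw [le_log_iff_exp_le (by linarith)]
  calc exp (2 / 3 * x) ≤ exp (x * log 2) := exp_le_exp.2 (by nlinarith [log_two_gt_d9])
    _ ≤ 1 + x := by linarith

lemma sub_one_add_mul_log_one_add_le {x : ℝ} (h0 : 0 ≤ x) (h1 : x ≤ 1) :
    x - (1 + x) * log (1 + x) ≤ -x ^ 2 / 3 := by
  let F : ℝ → ℝ := fun y => (1 + y) * log (1 + y) - y - y ^ 2 / 3
  have hderiv : ∀ y ∈ Set.Icc (0 : ℝ) 1, HasDerivAt F (log (1 + y) - 2 / 3 * y) y := by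
    intro y hy
    have hy1 : 1 + y ≠ 0 := by linarith [hy.1]
    refine (((((hasDerivAt_id' y).const_add 1).mul
      (((hasDerivAt_id' y).const_add 1).log hy1)).sub (hasDerivAt_id' y)).sub
      ((hasDerivAt_pow 2 y).div_const 3)).congr_deriv ?_
    field_simp
    ring
  have hmono : MonotoneOn F (Set.Icc 0 1) :=
    monotoneOn_of_hasDerivWithinAt_nonneg (convex_Icc 0 1)
      (fun y hy => (hderiv y hy).continuousAt.continuousWithinAt)
      (fun y hy => (hderiv y (interior_subset hy)).hasDerivWithinAt)
      (fun y hy => by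
        rw [interior_Icc] at hy
        linarith [two_thirds_mul_le_log_one_add hy.1.le hy.2.le])
  have := hmono ⟨le_rfl, zero_le_one⟩ ⟨h0, h1⟩ h0
  simp only [F, add_zero, log_one, mul_zero, sub_zero] at this
  linarith

lemma neg_sub_one_sub_mul_log_one_sub_le {x : ℝ} (h0 : 0 ≤ x) (h1 : x < 1) :
    -x - (1 - x) * log (1 - x) ≤ -x ^ 2 / 2 := by
  let G : ℝ → ℝ := fun y => (1 - y) * log (1 - y) + y - y ^ 2 / 2
  have hderiv : ∀ y ∈ Set.Icc 0 x, HasDerivAt G (-log (1 - y) - y) y := by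
    intro y hy
    have hy1 : 1 - y ≠ 0 := by linarith [hy.2]
    refine (((((hasDerivAt_id' y).const_sub 1).mul
      (((hasDerivAt_id' y).const_sub 1).log hy1)).add (hasDerivAt_id' y)).sub
      ((hasDerivAt_pow 2 y).div_const 2)).congr_deriv ?_
    field_simp
    ring
  have hmono : MonotoneOn G (Set.Icc 0 x) :=
    monotoneOn_of_hasDerivWithinAt_nonneg (convex_Icc 0 x)
      (fun y hy => (hderiv y hy).continuousAt.continuousWithinAt)
      (fun y hy => (hderiv y (interior_subset hy)).hasDerivWithinAt)
      (fun y hy => by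
        rw [interior_Icc] at hy
        linarith [log_le_sub_one_of_pos (by linarith [hy.2] : 0 < 1 - y)])
  have := hmono ⟨le_rfl, h0⟩ ⟨h0, le_rfl⟩ h0
  simp only [G, sub_zero, log_one, mul_zero, add_zero] at this
  linarith

section
variable {α : Type*} [DecidableEq α]

lemma sum_powersetCard_sum_sdiff_insert {M : Type*} [AddCommMonoid M] (s : Finset α) (n : ℕ)
    (f : Finset α → M) :
    ∑ J ∈ powersetCard n s, ∑ x ∈ s \ J, f (insert x J) =
      (n + 1) • ∑ S ∈ powersetCard (n + 1) s, f S := by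
  calc ∑ J ∈ powersetCard n s, ∑ x ∈ s \ J, f (insert x J)
      = ∑ p ∈ powersetCard n s ×ˢ s with p.2 ∉ p.1, f (insert p.2 p.1) := by
        refine (sum_finset_product' _ _ _ ?_ (f := fun J x => f (insert x J))).symm
        grind
    _ = ∑ p ∈ powersetCard (n + 1) s ×ˢ s with p.2 ∈ p.1, f p.1 := by
        apply sum_bij' (fun p _ => (insert p.2 p.1, p.2)) (fun p _ => (p.1.erase p.2, p.2))
        all_goals grind [erase_insert, insert_erase]
    _ = ∑ S ∈ powersetCard (n + 1) s, ∑ _x ∈ S, f S := by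
        refine sum_finset_product' _ _ _ ?_ (f := fun S _ => f S)
        grind
    _ = (n + 1) • ∑ S ∈ powersetCard (n + 1) s, f S := by
        rw [smul_sum]
        refine sum_congr rfl fun S hS => ?_
        rw [sum_const, (mem_powersetCard.1 hS).2]

lemma filter_notMem_powersetCard (s : Finset α) (n : ℕ) (u : α) :
    {J ∈ powersetCard n s | u ∉ J} = powersetCard n (s.erase u) := by
  ext J
  simp only [mem_filter, mem_powersetCard, subset_erase]
  tauto

lemma card_filter_mul_le_sum {ι R : Type*} [Semiring R] [PartialOrder R] [IsOrderedRing R]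
    [DecidableLE R] (s : Finset ι) {f : ι → R} (hf : ∀ i ∈ s, 0 ≤ f i) (c : R) :
    #{i ∈ s | c ≤ f i} * c ≤ ∑ i ∈ s, f i := by
  rw [← nsmul_eq_mul]
  exact (card_nsmul_le_sum _ _ _ fun i hi => (mem_filter.1 hi).2).trans
    (sum_le_sum_of_subset_of_nonneg (filter_subset _ _) fun i hi _ => hf i hi)

end

lemma card_filter_subtype_card_eq {U : Type*} [Fintype U] (s : ℕ) (P : Finset U → Prop)
    [DecidablePred P] :
    #{A : {A : Finset U // #A = s} | P A.1} = #{S ∈ powersetCard s univ | P S} := by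
  rw [card_filter, card_filter]
  exact (sum_subtype _ (fun _ => mem_powersetCard_univ) fun S => if P S then 1 else 0).symm

lemma one_add_div_mul_sub_one_nonneg {U : Type*} [Fintype U] (T : Finset U) {z : ℝ} (hz : 0 ≤ z) :
    0 ≤ 1 + #T / Fintype.card U * (z - 1) := by
  have hp0 : 0 ≤ (#T / Fintype.card U : ℝ) := by positivity
  have hp1 : (#T / Fintype.card U : ℝ) ≤ 1 :=
    div_le_one_of_le₀ (by exact_mod_cast card_le_univ T) (by positivity)
  nlinarith

section
variable {U : Type*} [Fintype U] [DecidableEq U]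

lemma sum_card_sdiff_powersetCard (T : Finset U) (n : ℕ) :
    ∑ J ∈ powersetCard n univ, #(T \ J) = #T * (Fintype.card U - 1).choose n := by
  calc ∑ J ∈ powersetCard n univ, #(T \ J)
      = ∑ u ∈ T, #{J ∈ powersetCard n univ | u ∉ J} := by
        simp only [card_filter]
        rw [sum_comm]
        refine sum_congr rfl fun J _ => ?_
        rw [sdiff_eq_filter, card_filter]
    _ = #T * (Fintype.card U - 1).choose n := by
        rw [sum_const_nat fun u _ => by
          rw [filter_notMem_powersetCard, card_powersetCard, card_erase_of_mem (mem_univ u),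
            card_univ]]

lemma sum_pow_card_insert_inter (T J : Finset U) (z : ℝ) :
    ∑ x ∈ univ \ J, z ^ #(insert x J ∩ T) =
      z ^ #(J ∩ T) * (#(univ \ J) + (z - 1) * #(T \ J)) := by
  have hinsert : ∀ x ∈ univ \ J,
      z ^ #(insert x J ∩ T) = z ^ #(J ∩ T) * (1 + (z - 1) * if x ∈ T then 1 else 0) := by
    intro x hx
    have hxJ : x ∉ J := (mem_sdiff.1 hx).2
    by_cases hxT : x ∈ T
    · rw [insert_inter_of_mem hxT, card_insert_of_notMem fun h => hxJ (mem_inter.1 h).1]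
      simp [hxT, pow_succ]
    · simp [insert_inter_of_notMem hxT, hxT]
  have hfilter : {x ∈ univ \ J | x ∈ T} = T \ J := by
    ext x
    simp [and_comm]
  rw [sum_congr rfl hinsert, ← mul_sum, sum_add_distrib, ← mul_sum, sum_boole, hfilter,
    sum_const, nsmul_one]

lemma sub_one_mul_sub_mul_pow_sub_pow_nonneg {z : ℝ} (hz : 0 ≤ z) (a b : ℕ) :
    0 ≤ (z - 1) * ((a : ℝ) - b) * (z ^ a - z ^ b) := by
  rcases le_total 1 z with hz1 | hz1 <;> rcases le_total a b with hab | hab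
  · exact mul_nonneg_of_nonpos_of_nonpos
      (mul_nonpos_of_nonneg_of_nonpos (by linarith) (by simpa using hab))
      (sub_nonpos.2 (pow_le_pow_right₀ hz1 hab))
  · exact mul_nonneg (mul_nonneg (by linarith) (by simpa using hab))
      (sub_nonneg.2 (pow_le_pow_right₀ hz1 hab))
  · exact mul_nonneg (mul_nonneg_of_nonpos_of_nonpos (by linarith) (by simpa using hab))
      (sub_nonneg.2 (pow_le_pow_of_le_one hz hz1 hab))
  · exact mul_nonneg_of_nonpos_of_nonpos
      (mul_nonpos_of_nonpos_of_nonneg (by linarith) (by simpa using hab))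
      (sub_nonpos.2 (pow_le_pow_of_le_one hz hz1 hab))

lemma succ_mul_sum_pow_card_inter (T : Finset U) (z : ℝ) (n : ℕ) :
    (n + 1) * ∑ S ∈ powersetCard (n + 1) univ, z ^ #(S ∩ T) =
      ∑ J ∈ powersetCard n univ, z ^ #(J ∩ T) * (#(univ \ J) + (z - 1) * #(T \ J)) := by
  rw [← Nat.cast_succ, ← nsmul_eq_mul, ← sum_powersetCard_sum_sdiff_insert]
  exact sum_congr rfl fun J _ => sum_pow_card_insert_inter T J z

lemma sum_card_sdiff_add_mul_card_sdiff (T : Finset U) (z : ℝ) {n : ℕ}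
    (hn : n < Fintype.card U) :
    ∑ J ∈ powersetCard n univ, ((#(univ \ J) : ℝ) + (z - 1) * #(T \ J)) =
      (Fintype.card U - n) * (Fintype.card U).choose n *
        (1 + #T / Fintype.card U * (z - 1)) := by
  obtain ⟨k, hk⟩ : ∃ k, Fintype.card U = k + 1 := ⟨_, (Nat.succ_pred_eq_of_pos (by omega)).symm⟩
  have hcompl : ∀ J ∈ powersetCard n (univ : Finset U), (#(univ \ J) : ℝ) = k + 1 - n :=
    fun J hJ => by
    rw [card_univ_sdiff, (mem_powersetCard.1 hJ).2, Nat.cast_sub hn.le, hk]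
    push_cast; ring
  have hsdiff : ∑ J ∈ powersetCard n univ, (#(T \ J) : ℝ) = #T * k.choose n := by
    rw [← Nat.cast_sum, sum_card_sdiff_powersetCard, hk]
    push_cast; rfl
  have hchoose : (k.choose n : ℝ) * (k + 1) = (k + 1).choose n * (k + 1 - n) := by
    have := congrArg (Nat.cast (R := ℝ)) (Nat.choose_mul_succ_eq k n)
    push_cast [Nat.cast_sub (show n ≤ k + 1 by omega)] at this
    exact this
  rw [sum_add_distrib, sum_congr rfl hcompl, ← mul_sum, hsdiff, sum_const, card_powersetCard,
    card_univ, hk, nsmul_eq_mul]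
  push_cast
  field_simp
  linear_combination (z - 1) * #T * hchoose

lemma antivaryOn_pow_card_inter (T : Finset U) {z : ℝ} (hz : 0 ≤ z) (n : ℕ) :
    AntivaryOn (fun J => z ^ #(J ∩ T)) (fun J => (#(univ \ J) : ℝ) + (z - 1) * #(T \ J))
      (powersetCard n (univ : Finset U) : Set (Finset U)) := by
  have hsdiff : ∀ J : Finset U, (#(T \ J) : ℝ) = #T - #(J ∩ T) := fun J => by
    rw [eq_sub_iff_add_eq, inter_comm]
    exact_mod_cast card_sdiff_add_card_inter T J
  rw [antivaryOn_iff_forall_mul_nonpos]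
  intro J hJ J' hJ'
  have hcompl : (#(univ \ J') : ℝ) = #(univ \ J) := by
    rw [card_univ_sdiff, card_univ_sdiff, (mem_powersetCard.1 hJ).2, (mem_powersetCard.1 hJ').2]
  simp only [hsdiff, hcompl]
  linarith [sub_one_mul_sub_mul_pow_sub_pow_nonneg hz #(J' ∩ T) #(J ∩ T)]

theorem sum_pow_card_inter_le (T : Finset U) {z : ℝ} (hz : 0 ≤ z) (n : ℕ) :
    ∑ J ∈ powersetCard n univ, z ^ #(J ∩ T) ≤
      (Fintype.card U).choose n * (1 + #T / Fintype.card U * (z - 1)) ^ n := by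
  induction n with
  | zero => simp
  | succ n ih =>
    rcases le_or_gt (Fintype.card U) n with hn | hn
    · rw [powersetCard_eq_empty.2 (by rw [card_univ]; omega), Nat.choose_eq_zero_of_lt (by omega)]
      simp
    have hρ := one_add_div_mul_sub_one_nonneg T hz
    set k := Fintype.card U
    set ρ := 1 + #T / k * (z - 1)
    have hC : (0 : ℝ) < k.choose n := by exact_mod_cast Nat.choose_pos hn.le
    have hkn : (0 : ℝ) ≤ k - n := by rw [sub_nonneg]; exact_mod_cast hn.le
    have hchoose : (k - n : ℝ) * k.choose n = (n + 1) * k.choose (n + 1) := by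
      rw [← Nat.cast_sub hn.le, mul_comm]
      exact_mod_cast (Nat.choose_succ_right_eq k n).symm.trans (mul_comm _ _)
    have hcheb := (antivaryOn_pow_card_inter T hz n).card_mul_sum_le_sum_mul_sum
    rw [card_powersetCard, card_univ, ← succ_mul_sum_pow_card_inter,
      sum_card_sdiff_add_mul_card_sdiff T z hn] at hcheb
    have key : k.choose n * ((n + 1) * ∑ S ∈ powersetCard (n + 1) univ, z ^ #(S ∩ T)) ≤
        k.choose n * ((n + 1) * (k.choose (n + 1) * ρ ^ (n + 1))) :=
      calc _ ≤ (∑ J ∈ powersetCard n univ, z ^ #(J ∩ T)) * ((k - n) * k.choose n * ρ) := hcheb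
        _ ≤ (k.choose n * ρ ^ n) * ((k - n) * k.choose n * ρ) := by gcongr
        _ = _ := by rw [pow_succ]; linear_combination k.choose n * ρ ^ n * ρ * hchoose
    exact le_of_mul_le_mul_left (le_of_mul_le_mul_left key hC) (by positivity)

theorem card_filter_mul_le_card_inter_le (T : Finset U) (s : ℕ) (c a : ℝ) :
    (#{S ∈ powersetCard s univ | c * a ≤ c * #(S ∩ T)} : ℝ) ≤
      (Fintype.card U).choose s * exp (s * (#T / Fintype.card U) * (exp c - 1) - c * a) := by
  set p : ℝ := #T / Fintype.card U
  have hmarkov := card_filter_mul_le_sum (powersetCard s (univ : Finset U))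
    (f := fun S => exp (c * #(S ∩ T))) (fun _ _ => (exp_pos _).le) (exp (c * a))
  simp only [exp_le_exp] at hmarkov
  have hmgf : ∑ S ∈ powersetCard s univ, exp (c * #(S ∩ T)) ≤
      (Fintype.card U).choose s * exp (s * p * (exp c - 1)) :=
    calc ∑ S ∈ powersetCard s univ, exp (c * #(S ∩ T))
        = ∑ S ∈ powersetCard s univ, exp c ^ #(S ∩ T) := by
          simp only [← exp_nat_mul, mul_comm]
      _ ≤ (Fintype.card U).choose s * (1 + p * (exp c - 1)) ^ s :=
          sum_pow_card_inter_le T (exp_pos c).le s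
      _ ≤ (Fintype.card U).choose s * exp (p * (exp c - 1)) ^ s := by
          have := one_add_div_mul_sub_one_nonneg T (exp_pos c).le
          gcongr
          linarith [add_one_le_exp (p * (exp c - 1))]
      _ = (Fintype.card U).choose s * exp (s * p * (exp c - 1)) := by
          rw [← exp_nat_mul, mul_assoc]
  rw [exp_sub, mul_div_assoc', le_div_iff₀ (exp_pos _)]
  exact hmarkov.trans hmgf

theorem card_upper_tail_le (T : Finset U) (s : ℕ) {α μ : ℝ} (hα0 : 0 ≤ α) (hα1 : α ≤ 1)
    (hμ : s * (#T / Fintype.card U) ≤ μ) :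
    (#{S ∈ powersetCard s univ | (1 + α) * μ ≤ #(S ∩ T)} : ℝ) ≤
      (Fintype.card U).choose s * exp (-(α ^ 2 * μ) / 3) := by
  have hlog : 0 ≤ log (1 + α) := log_nonneg (by linarith)
  have hμ0 : 0 ≤ μ := le_trans (by positivity) hμ
  calc (#{S ∈ powersetCard s univ | (1 + α) * μ ≤ #(S ∩ T)} : ℝ)
      ≤ #{S ∈ powersetCard s univ | log (1 + α) * ((1 + α) * μ) ≤ log (1 + α) * #(S ∩ T)} := by
        exact_mod_cast card_le_card (monotone_filter_right _ fun _ _ h =>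
          mul_le_mul_of_nonneg_left h hlog)
    _ ≤ _ := card_filter_mul_le_card_inter_le T s _ _
    _ ≤ _ := by
        rw [exp_log (by linarith)]
        gcongr
        nlinarith [sub_one_add_mul_log_one_add_le hα0 hα1]

theorem card_lower_tail_le (T : Finset U) (s : ℕ) {α : ℝ} (hα0 : 0 ≤ α) (hα1 : α < 1) :
    (#{S ∈ powersetCard s univ | (#(S ∩ T) : ℝ) ≤ (1 - α) * (s * (#T / Fintype.card U))} : ℝ) ≤
      (Fintype.card U).choose s * exp (-(α ^ 2 * (s * (#T / Fintype.card U))) / 2) := by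
  have hlog : log (1 - α) ≤ 0 := log_nonpos (by linarith) (by linarith)
  have hμ0 : 0 ≤ (s * (#T / Fintype.card U) : ℝ) := by positivity
  calc (#{S ∈ powersetCard s univ | (#(S ∩ T) : ℝ) ≤ (1 - α) * (s * (#T / Fintype.card U))} : ℝ)
      ≤ #{S ∈ powersetCard s univ |
          log (1 - α) * ((1 - α) * (s * (#T / Fintype.card U))) ≤ log (1 - α) * #(S ∩ T)} := by
        exact_mod_cast card_le_card (monotone_filter_right _ fun _ _ h =>
          mul_le_mul_of_nonpos_left h hlog)
    _ ≤ _ := card_filter_mul_le_card_inter_le T s _ _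
    _ ≤ _ := by
        rw [exp_log (by linarith)]
        gcongr
        nlinarith [neg_sub_one_sub_mul_log_one_sub_le hα0 hα1]

theorem card_unusualIntersection_le_of_le (hk : 0 < Fintype.card U) (T : Finset U) (s : ℕ)
    {α δ : ℝ} (hα0 : 0 ≤ α) (hα1 : α < 1) (hT : δ * Fintype.card U ≤ #T) :
    (#{S ∈ powersetCard s univ | UnusualIntersection α δ s T S} : ℝ) ≤
      (Fintype.card U).choose s * (2 * exp (-(α ^ 2 * δ * s) / 3)) := by
  set μ : ℝ := s * (#T / Fintype.card U)
  have hμ : ∀ x : ℝ, x * s * #T / Fintype.card U = x * μ := fun x => by ring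
  have hδμ : δ * s ≤ μ := by
    rw [mul_comm δ]
    exact mul_le_mul_of_nonneg_left ((le_div_iff₀ (by exact_mod_cast hk)).2 hT) (by positivity)
  have hsub : {S ∈ powersetCard s (univ : Finset U) | UnusualIntersection α δ s T S} ⊆
      {S ∈ powersetCard s (univ : Finset U) | (#(S ∩ T) : ℝ) ≤ (1 - α) * μ} ∪
        {S ∈ powersetCard s (univ : Finset U) | (1 + α) * μ ≤ #(S ∩ T)} := by
    intro S hS
    simp only [UnusualIntersection, Set.mem_Icc, hμ, not_and_or, not_le, mem_filter,
      mem_union] at hS ⊢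
    rcases hS with ⟨hS, ⟨-, h | h⟩ | ⟨h, -⟩⟩
    · exact .inl ⟨hS, h.le⟩
    · exact .inr ⟨hS, h.le⟩
    · exact absurd hT (not_le.2 h)
  have h3 : exp (-(α ^ 2 * μ) / 3) ≤ exp (-(α ^ 2 * δ * s) / 3) := by
    rw [exp_le_exp, mul_assoc]
    linarith [mul_le_mul_of_nonneg_left hδμ (sq_nonneg α)]
  have h2 : exp (-(α ^ 2 * μ) / 2) ≤ exp (-(α ^ 2 * μ) / 3) := by
    rw [exp_le_exp]
    linarith [mul_nonneg (sq_nonneg α) (show 0 ≤ μ by positivity)]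
  calc (#{S ∈ powersetCard s univ | UnusualIntersection α δ s T S} : ℝ)
      ≤ #{S ∈ powersetCard s univ | (#(S ∩ T) : ℝ) ≤ (1 - α) * μ} +
          #{S ∈ powersetCard s univ | (1 + α) * μ ≤ #(S ∩ T)} := by
        exact_mod_cast (card_le_card hsub).trans (card_union_le _ _)
    _ ≤ (Fintype.card U).choose s * exp (-(α ^ 2 * μ) / 2) +
          (Fintype.card U).choose s * exp (-(α ^ 2 * μ) / 3) :=
        add_le_add (card_lower_tail_le T s hα0 hα1) (card_upper_tail_le T s hα0 hα1.le le_rfl)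
    _ ≤ _ := by
        have hC : (0 : ℝ) ≤ (Fintype.card U).choose s := by positivity
        rw [two_mul, mul_add]
        exact add_le_add (mul_le_mul_of_nonneg_left (h2.trans h3) hC)
          (mul_le_mul_of_nonneg_left h3 hC)

theorem card_unusualIntersection_le_of_lt (hk : 0 < Fintype.card U) (T : Finset U) (s : ℕ)
    {α δ : ℝ} (hα0 : 0 ≤ α) (hα1 : α ≤ 1) (hT : #T < δ * Fintype.card U) :
    (#{S ∈ powersetCard s univ | UnusualIntersection α δ s T S} : ℝ) ≤
      (Fintype.card U).choose s * exp (-(α ^ 2 * δ * s) / 3) := by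
  have hμδ : s * (#T / Fintype.card U) ≤ δ * s := by
    rw [mul_comm δ]
    exact mul_le_mul_of_nonneg_left ((div_le_iff₀ (by exact_mod_cast hk)).2 hT.le)
      (by positivity)
  have hsub : {S ∈ powersetCard s (univ : Finset U) | UnusualIntersection α δ s T S} ⊆
      {S ∈ powersetCard s (univ : Finset U) | (1 + α) * (δ * s) ≤ #(S ∩ T)} := by
    refine monotone_filter_right _ fun S _ h => ?_
    rcases h with ⟨h, -⟩ | ⟨-, h⟩
    · exact absurd h (not_le.2 hT)
    · linarith
  rw [mul_assoc (α ^ 2)]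
  exact le_trans (by exact_mod_cast card_le_card hsub) (card_upper_tail_le T s hα0 hα1 hμδ)

theorem card_unusualIntersection_le (hk : 0 < Fintype.card U) (T : Finset U) (s : ℕ) {α δ : ℝ}
    (hα0 : 0 < α) (hα1 : α < 1) :
    (#{S ∈ powersetCard s univ | UnusualIntersection α δ s T S} : ℝ) ≤
      (Fintype.card U).choose s * (2 * exp (-(α ^ 2 * δ * s) / 3)) := by
  rcases le_or_gt (δ * Fintype.card U) #T with hT | hT
  · exact card_unusualIntersection_le_of_le hk T s hα0.le hα1 hT
  · refine (card_unusualIntersection_le_of_lt hk T s hα0.le hα1.le hT).trans ?_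
    gcongr
    linarith [exp_pos (-(α ^ 2 * δ * s) / 3)]

end

section
variable {ι β : Type*} [Fintype ι] [DecidableEq ι] [Fintype β] (P : β → Prop) [DecidablePred P]

lemma sum_two_pow_card_filter_apply :
    ∑ f : ι → β, (2 : ℝ) ^ #{i | P (f i)} = (Fintype.card β + #{b | P b}) ^ Fintype.card ι := by
  have hprod : ∀ f : ι → β, (2 : ℝ) ^ #{i | P (f i)} = ∏ i, if P (f i) then 2 else 1 := by
    simp [prod_ite]
  have hsum : ∑ b : β, (if P b then (2 : ℝ) else 1) = Fintype.card β + #{b | P b} := by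
    have := card_filter_add_card_filter_not (s := univ) P
    rw [card_univ] at this
    rw [sum_ite, sum_const, sum_const, ← this]
    push_cast
    ring
  rw [sum_congr rfl fun f _ => hprod f, ← hsum, ← card_univ, ← prod_const]
  exact (Fintype.prod_sum fun _ b => if P b then (2 : ℝ) else 1).symm

theorem card_filter_lt_card_filter_apply_le {ε : ℝ}
    (hP : (#{b | P b} : ℝ) ≤ ε * Fintype.card β) (θ : ℝ) :
    (#{f : ι → β | θ < #{i | P (f i)}} : ℝ) ≤
      Fintype.card β ^ Fintype.card ι * exp (ε * Fintype.card ι - θ * log 2) := by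
  have hmarkov := card_filter_mul_le_sum univ (f := fun f : ι → β => (2 : ℝ) ^ #{i | P (f i)})
    (fun _ _ => by positivity) (exp (θ * log 2))
  have hbad : #{f : ι → β | θ < #{i | P (f i)}} ≤
      #{f : ι → β | exp (θ * log 2) ≤ (2 : ℝ) ^ #{i | P (f i)}} :=
    card_le_card (monotone_filter_right _ fun f _ h => by
      rw [← exp_log two_pos, ← exp_nat_mul, exp_log two_pos]
      exact exp_le_exp.2 (mul_le_mul_of_nonneg_right h.le (log_nonneg one_le_two)))
  have hgrowth : ((Fintype.card β : ℝ) + #{b | P b}) ^ Fintype.card ι ≤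
      Fintype.card β ^ Fintype.card ι * exp (ε * Fintype.card ι) := by
    rw [mul_comm ε, exp_nat_mul, ← mul_pow]
    gcongr
    nlinarith [hP, add_one_le_exp ε, show (0 : ℝ) ≤ Fintype.card β by positivity]
  rw [exp_sub, mul_div_assoc', le_div_iff₀ (exp_pos _)]
  calc (#{f : ι → β | θ < #{i | P (f i)}} : ℝ) * exp (θ * log 2)
      ≤ #{f : ι → β | exp (θ * log 2) ≤ (2 : ℝ) ^ #{i | P (f i)}} * exp (θ * log 2) :=
        mul_le_mul_of_nonneg_right (by exact_mod_cast hbad) (exp_pos _).le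
    _ ≤ _ := hmarkov
    _ = _ := sum_two_pow_card_filter_apply P
    _ ≤ _ := hgrowth

end

theorem unusual_intersections_concentration_general
    {U : Type*} [Fintype U] [DecidableEq U]
    (hk : 1 ≤ Fintype.card U)
    (α δ : ℝ) (hα0 : 0 < α) (hα1 : α < 1)
    (s : ℕ)
    (t : ℕ) (T : Finset U) :
    (((univ : Finset (Fin t → {A : Finset U // A.card = s})).filter (fun S =>
        4 * t * Real.exp (-(α ^ 2 * δ * s) / 3) <
          (((univ : Finset (Fin t)).filter
              (fun i => UnusualIntersection α δ s T (S i).1)).card : ℝ))).card : ℝ) /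
      (Fintype.card (Fin t → {A : Finset U // A.card = s}) : ℝ)
      ≤ Real.exp (-((t : ℝ) / 3) * Real.exp (-(α ^ 2 * δ * s) / 3)) := by
  set q := exp (-(α ^ 2 * δ * s) / 3)
  have hunusual : (#{A : {A : Finset U // #A = s} | UnusualIntersection α δ s T A.1} : ℝ) ≤
      2 * q * Fintype.card {A : Finset U // #A = s} := by
    rw [Fintype.card_finset_len, card_filter_subtype_card_eq, mul_comm]
    exact card_unusualIntersection_le hk T s hα0 hα1
  refine div_le_of_le_mul₀ (by positivity) (exp_pos _).le ?_
  calc _ ≤ _ := card_filter_lt_card_filter_apply_le _ hunusual (4 * t * q)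
    _ ≤ _ := by
      rw [Fintype.card_fun, Fintype.card_fin, mul_comm]
      push_cast
      gcongr
      nlinarith [log_two_gt_d9, show 0 ≤ t * q by positivity]

/-- For a fixed `T ⊆ U` and `t` independent uniformly random `s`-element subsets
`S 1, …, S t` of `U`, the probability that more than `4·t·exp(−α²·δ·s/3)` of the sets have
an unusual intersection with `T` is at most `exp(−(t/3)·exp(−α²·δ·s/3))`.  The tuple
`(S 1, …, S t)` of independent uniform `s`-sets is modelled as a uniform element of the
(finite) space of functions `Fin t → {A : Finset U // A.card = s}`, and the probability is
expressed by counting. -/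
theorem unusual_intersections_concentration
    {U : Type*} [Fintype U] [DecidableEq U]
    (hk : 1 ≤ Fintype.card U)
    (α δ : ℝ) (hα0 : 0 < α) (hα1 : α < 1) (hδ0 : 0 < δ) (hδ1 : δ < 1)
    (s : ℕ) (hs1 : 1 ≤ s) (hsk : s ≤ Fintype.card U)
    (t : ℕ) (T : Finset U) :
    (((univ : Finset (Fin t → {A : Finset U // A.card = s})).filter (fun S =>
        4 * t * Real.exp (-(α ^ 2 * δ * s) / 3) <
          (((univ : Finset (Fin t)).filter
              (fun i => UnusualIntersection α δ s T (S i).1)).card : ℝ))).card : ℝ) /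
      (Fintype.card (Fin t → {A : Finset U // A.card = s}) : ℝ)
      ≤ Real.exp (-((t : ℝ) / 3) * Real.exp (-(α ^ 2 * δ * s) / 3)) :=
  unusual_intersections_concentration_general hk α δ hα0 hα1 s t T
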